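/- arXiv:1606.05046 — 2 statements merged into one kernel-verified Lean document; each statement's English description precedes it below -/
import Mathlib

section
/- (Image of the degenerate direction, step S¹ = {g(u) : ‖u‖ = 1} in the proof of Theorem 5.) Assume the avoidance hypothesis. Then the set {g(u) : u ∈ ℝ², ‖u‖ ≤ 1 and c·u₁ + d·u₂ = 0} equals the singleton {0}, and moreover there exists u ∈ ℝ² with ‖u‖ = 1 and g(u) = 0; consequently {g(u) : ‖u‖ = 1 or (‖u‖ ≤ 1 and c·u₁ + d·u₂ = 0)} = {g(u) : ‖u‖ = 1}. -/
noncomputable section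

/-- Matrix–vector multiplication, viewed as a map on the Euclidean plane. -/
def mv (M : Matrix (Fin 2) (Fin 2) ℝ) (u : EuclideanSpace ℝ (Fin 2)) :
    EuclideanSpace ℝ (Fin 2) := WithLp.toLp 2 (M.mulVec u)

/-- Range `r(p) = √((p₁−a)² + (p₂−b)²)` to the sensor located at `(a, b)`. -/
def rr (a b : ℝ) (p : EuclideanSpace ℝ (Fin 2)) : ℝ :=
  Real.sqrt ((p 0 - a) ^ 2 + (p 1 - b) ^ 2)

/-- Bearing `θ(p)`: polar angle in `(−π, π]` of the complex number `(p₁−a) + i(p₂−b)`. -/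
def theta (a b : ℝ) (p : EuclideanSpace ℝ (Fin 2)) : ℝ :=
  Complex.arg ⟨p 0 - a, p 1 - b⟩

/-- Jacobian matrix of the range–bearing measurement map at `p`. -/
def Jh (a b : ℝ) (p : EuclideanSpace ℝ (Fin 2)) : Matrix (Fin 2) (Fin 2) ℝ :=
  !![(p 0 - a) / rr a b p, (p 1 - b) / rr a b p;
     -(p 1 - b) / (rr a b p) ^ 2, (p 0 - a) / (rr a b p) ^ 2]

/-- The range–bearing measurement map `h(p) = (r(p), θ(p))`. -/
def hMeas (a b : ℝ) (p : EuclideanSpace ℝ (Fin 2)) : EuclideanSpace ℝ (Fin 2) :=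
  WithLp.toLp 2 ![rr a b p, theta a b p]

/-- The linearization remainder `g(u) = h(x + Eu) − h(x) − J_h(x)·(Eu)`. -/
def gRem (a b : ℝ) (x : EuclideanSpace ℝ (Fin 2)) (E : Matrix (Fin 2) (Fin 2) ℝ)
    (u : EuclideanSpace ℝ (Fin 2)) : EuclideanSpace ℝ (Fin 2) :=
  hMeas a b (x + mv E u) - hMeas a b x - mv (Jh a b x) (mv E u)

/-!
On a degenerate direction, `c u₁ + d u₂ = 0` says exactly that `E u` is parallel to `x − o`,
say `E u = t (x − o)`. Avoidance forces `1 + t > 0`: otherwise rescaling `u` by `-1/t ∈ (0, 1]`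
puts the point `o` itself in the ellipsoid. So `x + E u` lies on the open ray from `o` through
`x`, where the bearing is constant and the range is `(1 + t) r(x)`; as `J_h(x)` maps `x − o` to
`(r(x), 0)`, the linearization is exact along that ray and `g(u) = 0`. Every linear form on the
plane vanishes on some unit vector, so the degenerate directions add no value to `S¹`.
-/

section

variable {a b : ℝ} {p q x : EuclideanSpace ℝ (Fin 2)} {E : Matrix (Fin 2) (Fin 2) ℝ}

lemma euclideanSpace_fin_two_ext {v w : EuclideanSpace ℝ (Fin 2)} (h0 : v 0 = w 0)
    (h1 : v 1 = w 1) : v = w := by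
  ext i
  fin_cases i
  exacts [h0, h1]

@[simp]
lemma mv_apply (M : Matrix (Fin 2) (Fin 2) ℝ) (u : EuclideanSpace ℝ (Fin 2)) (i : Fin 2) :
    mv M u i = M i 0 * u 0 + M i 1 * u 1 := by
  simp only [mv, PiLp.toLp_apply, Matrix.mulVec, dotProduct, Fin.sum_univ_two]

lemma mv_smul (M : Matrix (Fin 2) (Fin 2) ℝ) (s : ℝ) (u : EuclideanSpace ℝ (Fin 2)) :
    mv M (s • u) = s • mv M u := by
  simp only [mv, WithLp.ofLp_smul, Matrix.mulVec_smul, WithLp.toLp_smul]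

lemma rr_eq_norm_sub (a b : ℝ) (p : EuclideanSpace ℝ (Fin 2)) :
    rr a b p = ‖p - !₂[a, b]‖ := by
  simp [rr, EuclideanSpace.norm_eq, Fin.sum_univ_two]

lemma rr_ne_zero (hp : p ≠ !₂[a, b]) : rr a b p ≠ 0 := by
  rwa [rr_eq_norm_sub, norm_ne_zero_iff, sub_ne_zero]

lemma rr_eq_mul_of_sub_eq_smul {s : ℝ} (hs : 0 ≤ s)
    (h : q - !₂[a, b] = s • (p - !₂[a, b])) : rr a b q = s * rr a b p := by
  rw [rr_eq_norm_sub, rr_eq_norm_sub, h, norm_smul, Real.norm_of_nonneg hs]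

lemma theta_eq_of_sub_eq_smul {s : ℝ} (hs : 0 < s) (h : q - !₂[a, b] = s • (p - !₂[a, b])) :
    theta a b q = theta a b p := by
  have h0 := congrArg (· 0) h
  have h1 := congrArg (· 1) h
  simp only [PiLp.sub_apply, PiLp.smul_apply, smul_eq_mul,
    Matrix.cons_val_zero, Matrix.cons_val_one] at h0 h1
  have hz : (⟨q 0 - a, q 1 - b⟩ : ℂ) = (s : ℂ) * ⟨p 0 - a, p 1 - b⟩ := by
    apply Complex.ext <;> simp [h0, h1]
  rw [theta, theta, hz, Complex.arg_real_mul _ hs]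

lemma mv_Jh_sub (hp : p ≠ !₂[a, b]) :
    mv (Jh a b p) (p - !₂[a, b]) = !₂[rr a b p, 0] := by
  have hr := rr_ne_zero hp
  have hr2 : rr a b p ^ 2 = (p 0 - a) ^ 2 + (p 1 - b) ^ 2 :=
    Real.sq_sqrt (by positivity)
  refine euclideanSpace_fin_two_ext ?_ ?_ <;>
    simp only [Jh, mv_apply, PiLp.sub_apply, Matrix.of_apply, Matrix.cons_val',
      Matrix.cons_val_zero, Matrix.cons_val_one, Matrix.cons_val_fin_one]
  · field_simp
    linear_combination hr2.symm
  · ring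

lemma gRem_eq_zero_of_mv_eq_smul {u : EuclideanSpace ℝ (Fin 2)} {t : ℝ} (hx : x ≠ !₂[a, b])
    (ht : 0 < 1 + t) (hv : mv E u = t • (x - !₂[a, b])) : gRem a b x E u = 0 := by
  have hq : x + mv E u - !₂[a, b] = (1 + t) • (x - !₂[a, b]) := by
    rw [hv]; module
  rw [gRem, hMeas, hMeas, rr_eq_mul_of_sub_eq_smul ht.le hq, theta_eq_of_sub_eq_smul ht hq, hv,
    mv_smul, mv_Jh_sub hx]
  refine euclideanSpace_fin_two_ext ?_ ?_ <;>
    simp only [PiLp.sub_apply, PiLp.smul_apply, smul_eq_mul, PiLp.zero_apply,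
      Matrix.cons_val_zero, Matrix.cons_val_one, Matrix.cons_val_fin_one] <;>
    ring

lemma exists_eq_smul_of_cross_eq_zero {v w : EuclideanSpace ℝ (Fin 2)} (hw : w ≠ 0)
    (h : v 0 * w 1 - v 1 * w 0 = 0) : ∃ t : ℝ, v = t • w := by
  have hn : w 0 ^ 2 + w 1 ^ 2 ≠ 0 := by
    rw [← Fin.sum_univ_two (fun i ↦ w i ^ 2), ← EuclideanSpace.real_norm_sq_eq]
    positivity
  refine ⟨(v 0 * w 0 + v 1 * w 1) / (w 0 ^ 2 + w 1 ^ 2), ?_⟩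
  refine euclideanSpace_fin_two_ext ?_ ?_ <;> simp only [PiLp.smul_apply, smul_eq_mul] <;>
    field_simp
  · linear_combination w 1 * h
  · linear_combination -w 0 * h

lemma exists_norm_eq_one_mul_add_mul_eq_zero (c d : ℝ) :
    ∃ u : EuclideanSpace ℝ (Fin 2), ‖u‖ = 1 ∧ c * u 0 + d * u 1 = 0 := by
  by_cases hv : !₂[d, -c] = 0
  · have hc : c = 0 := by simpa using congrArg (· 1) hv
    have hd : d = 0 := by simpa using congrArg (· 0) hv
    exact ⟨EuclideanSpace.single 0 1, by simp, by simp [hc, hd]⟩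
  · refine ⟨‖!₂[d, -c]‖⁻¹ • !₂[d, -c], norm_smul_inv_norm hv, ?_⟩
    simp only [PiLp.smul_apply, smul_eq_mul, Matrix.cons_val_zero, Matrix.cons_val_one,
      Matrix.cons_val_fin_one]
    ring

def AvoidsRadial (a b : ℝ) (x : EuclideanSpace ℝ (Fin 2)) (E : Matrix (Fin 2) (Fin 2) ℝ) :
    Prop :=
  ∀ u : EuclideanSpace ℝ (Fin 2), ‖u‖ ≤ 1 →
    ¬((x + mv E u) 0 ≤ a ∧ (x + mv E u) 1 = b)

namespace AvoidsRadial

lemma ne_center (h : AvoidsRadial a b x E) : x ≠ !₂[a, b] := by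
  rintro rfl
  exact h 0 (by simp) (by simp)

lemma one_add_pos (h : AvoidsRadial a b x E) {u : EuclideanSpace ℝ (Fin 2)} {t : ℝ}
    (hu : ‖u‖ ≤ 1) (hv : mv E u = t • (x - !₂[a, b])) : 0 < 1 + t := by
  by_contra! ht
  have htneg : t < 0 := by linarith
  have hμ : 0 < -t⁻¹ := neg_pos.2 (inv_lt_zero.2 htneg)
  have hμ1 : -t⁻¹ ≤ 1 := by
    rw [← inv_neg]; exact inv_le_one_of_one_le₀ (by linarith)
  have hcenter : x + mv E ((-t⁻¹) • u) = !₂[a, b] := by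
    rw [mv_smul, hv, smul_smul, neg_mul, inv_mul_cancel₀ htneg.ne]
    module
  refine h ((-t⁻¹) • u) ?_ (by rw [hcenter]; simp)
  rw [norm_smul, Real.norm_of_nonneg hμ.le]
  exact mul_le_one₀ hμ1 (norm_nonneg u) hu

lemma gRem_eq_zero (h : AvoidsRadial a b x E) {u : EuclideanSpace ℝ (Fin 2)} (hu : ‖u‖ ≤ 1)
    (hdeg : mv E u 0 * (x 1 - b) - mv E u 1 * (x 0 - a) = 0) : gRem a b x E u = 0 := by
  obtain ⟨t, ht⟩ := exists_eq_smul_of_cross_eq_zero (sub_ne_zero.2 h.ne_center)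
    (v := mv E u) (by simpa using hdeg)
  exact gRem_eq_zero_of_mv_eq_smul h.ne_center (h.one_add_pos hu ht) ht

end AvoidsRadial

end

theorem degenerate_image_eq_singleton_zero_general
    (a b : ℝ) (x : EuclideanSpace ℝ (Fin 2)) (E : Matrix (Fin 2) (Fin 2) ℝ)
    (havoid : ∀ u : EuclideanSpace ℝ (Fin 2), ‖u‖ ≤ 1 →
      ¬((x + mv E u) 0 ≤ a ∧ (x + mv E u) 1 = b))
    (c d : ℝ)
    (hc : c = E 0 0 * (x 1 - b) - E 1 0 * (x 0 - a))
    (hd : d = E 0 1 * (x 1 - b) - E 1 1 * (x 0 - a)) :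
    {y : EuclideanSpace ℝ (Fin 2) | ∃ u : EuclideanSpace ℝ (Fin 2),
        (‖u‖ ≤ 1 ∧ c * u 0 + d * u 1 = 0) ∧ gRem a b x E u = y} = {0} ∧
      (∃ u : EuclideanSpace ℝ (Fin 2), ‖u‖ = 1 ∧ gRem a b x E u = 0) ∧
      {y : EuclideanSpace ℝ (Fin 2) | ∃ u : EuclideanSpace ℝ (Fin 2),
          (‖u‖ = 1 ∨ (‖u‖ ≤ 1 ∧ c * u 0 + d * u 1 = 0)) ∧ gRem a b x E u = y} =
        {y : EuclideanSpace ℝ (Fin 2) | ∃ u : EuclideanSpace ℝ (Fin 2),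
          ‖u‖ = 1 ∧ gRem a b x E u = y} := by
  have hdeg : ∀ u : EuclideanSpace ℝ (Fin 2), ‖u‖ ≤ 1 → c * u 0 + d * u 1 = 0 →
      gRem a b x E u = 0 := fun u hu hcd ↦
    AvoidsRadial.gRem_eq_zero havoid hu <| by
      simp only [mv_apply]
      linear_combination hcd - u 0 * hc - u 1 * hd
  obtain ⟨u₁, hu₁, hcd₁⟩ := exists_norm_eq_one_mul_add_mul_eq_zero c d
  have hg₁ : gRem a b x E u₁ = 0 := hdeg u₁ hu₁.le hcd₁
  refine ⟨?_, ⟨u₁, hu₁, hg₁⟩, ?_⟩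
  · refine Set.eq_singleton_iff_unique_mem.2
      ⟨⟨0, ⟨by simp, by simp⟩, hdeg 0 (by simp) (by simp)⟩, ?_⟩
    rintro _ ⟨u, ⟨hu, hcd⟩, rfl⟩
    exact hdeg u hu hcd
  · refine Set.Subset.antisymm ?_ fun y ⟨u, hu, hy⟩ ↦ ⟨u, Or.inl hu, hy⟩
    rintro _ ⟨u, hu | ⟨hu, hcd⟩, rfl⟩
    · exact ⟨u, hu, rfl⟩
    · exact ⟨u₁, hu₁, by rw [hg₁, hdeg u hu hcd]⟩

/-- **Image of the degenerate direction.** Under the avoidance hypothesis, the image of the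
degenerate directions is the singleton `{0}`, the value `0` is also attained on the unit
sphere, and hence `S¹ = {g(u) : ‖u‖ = 1}`. -/
theorem degenerate_image_eq_singleton_zero
    (a b : ℝ) (x : EuclideanSpace ℝ (Fin 2)) (E : Matrix (Fin 2) (Fin 2) ℝ)
    (hE : 0 < E.det)
    (havoid : ∀ u : EuclideanSpace ℝ (Fin 2), ‖u‖ ≤ 1 →
      ¬((x + mv E u) 0 ≤ a ∧ (x + mv E u) 1 = b))
    (c d : ℝ)
    (hc : c = E 0 0 * (x 1 - b) - E 1 0 * (x 0 - a))
    (hd : d = E 0 1 * (x 1 - b) - E 1 1 * (x 0 - a)) :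
    {y : EuclideanSpace ℝ (Fin 2) | ∃ u : EuclideanSpace ℝ (Fin 2),
        (‖u‖ ≤ 1 ∧ c * u 0 + d * u 1 = 0) ∧ gRem a b x E u = y} = {0} ∧
      (∃ u : EuclideanSpace ℝ (Fin 2), ‖u‖ = 1 ∧ gRem a b x E u = 0) ∧
      {y : EuclideanSpace ℝ (Fin 2) | ∃ u : EuclideanSpace ℝ (Fin 2),
          (‖u‖ = 1 ∨ (‖u‖ ≤ 1 ∧ c * u 0 + d * u 1 = 0)) ∧ gRem a b x E u = y} =
        {y : EuclideanSpace ℝ (Fin 2) | ∃ u : EuclideanSpace ℝ (Fin 2),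
          ‖u‖ = 1 ∧ gRem a b x E u = y} :=
  degenerate_image_eq_singleton_zero_general a b x E havoid c d hc hd
end
end

section
/- (Frontier localization, step S^b ⊆ S¹ in the proof of Theorem 5.) Assume the avoidance hypothesis. Then the topological frontier of the remainder set S = {g(u) : u ∈ ℝ², ‖u‖ ≤ 1} is contained in {g(u) : u ∈ ℝ², ‖u‖ = 1 or (‖u‖ ≤ 1 and c·u₁ + d·u₂ = 0)}. -/
noncomputable section

/-!
A point `g(u)` with `‖u‖ < 1` can only lie on the frontier of the compact set `S` if `g` fails
to be a local submersion at `u` (inverse function theorem). Writing `p = x + Eu`, the derivative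
of `g` at `u` is `(J_h(p) − J_h(x)) E`, and with `r = r(p)`, `R = r(x)` one computes
`det (J_h(p) − J_h(x)) = (r + R)(rR − ⟨p − o, x − o⟩) / (rR)²`,
which by Cauchy–Schwarz vanishes only when `p − o` and `x − o` are parallel, i.e. when their
cross product `c·u₁ + d·u₂` vanishes.
-/

open Filter Topology Set Metric Matrix

section InverseFunction

variable {𝕜 : Type*} [NontriviallyNormedField 𝕜]
  {E : Type*} [NormedAddCommGroup E] [NormedSpace 𝕜 E] [CompleteSpace E]
  {F : Type*} [NormedAddCommGroup F] [NormedSpace 𝕜 F] [CompleteSpace F]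
  {f : E → F} {K : Set E}

theorem HasStrictFDerivAt.mem_interior_image {f' : E →L[𝕜] F} {u : E}
    (hf : HasStrictFDerivAt f f' u) (hsurj : f'.range = ⊤) (hK : K ∈ 𝓝 u) :
    f u ∈ interior (f '' K) := by
  rw [mem_interior_iff_mem_nhds, ← hf.map_nhds_eq_of_surj hsurj]
  exact image_mem_map hK

theorem IsCompact.frontier_image_subset {Z : Set E} (hK : IsCompact K) (hf : ContinuousOn f K)
    (hreg : ∀ u ∈ interior K, u ∉ Z →
      ∃ f' : E →L[𝕜] F, HasStrictFDerivAt f f' u ∧ f'.range = ⊤) :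
    frontier (f '' K) ⊆ f '' {u ∈ K | u ∉ interior K ∨ u ∈ Z} := by
  rintro _ hy
  obtain ⟨u, huK, rfl⟩ := (hK.image_of_continuousOn hf).isClosed.frontier_subset hy
  refine ⟨u, ⟨huK, ?_⟩, rfl⟩
  by_contra! hu
  obtain ⟨f', hf', hsurj⟩ := hreg u hu.1 hu.2
  exact hy.2 (hf'.mem_interior_image hsurj (mem_interior_iff_mem_nhds.1 hu.1))

end InverseFunction

theorem Matrix.range_toEuclideanCLM_eq_top {𝕜 n : Type*} [RCLike 𝕜] [Fintype n] [DecidableEq n]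
    {M : Matrix n n 𝕜} (hM : M.det ≠ 0) : (toEuclideanCLM (n := n) (𝕜 := 𝕜) M).range = ⊤ := by
  refine LinearMap.range_eq_top.2 fun y => ?_
  obtain ⟨v, hv⟩ := mulVec_surjective_iff_isUnit.2 ((isUnit_iff_isUnit_det M).2 hM.isUnit) y.ofLp
  exact ⟨WithLp.toLp 2 v, by simp [hv]⟩

local notation "V2" => EuclideanSpace ℝ (Fin 2)

section RangeBearing

variable {a b : ℝ} {p q : V2}

lemma rr_sq (a b : ℝ) (p : V2) : rr a b p ^ 2 = (p 0 - a) ^ 2 + (p 1 - b) ^ 2 :=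
  Real.sq_sqrt (by positivity)

lemma rr_eq_norm (a b : ℝ) (p : V2) : rr a b p = ‖(⟨p 0 - a, p 1 - b⟩ : ℂ)‖ := by
  simp [rr, Complex.norm_def, Complex.normSq_apply, sq]

lemma mem_slitPlane_of_not_radial (hp : ¬(p 0 ≤ a ∧ p 1 = b)) :
    (⟨p 0 - a, p 1 - b⟩ : ℂ) ∈ Complex.slitPlane := by
  rw [Complex.mem_slitPlane_iff, sub_pos, sub_ne_zero]
  by_contra! h
  exact hp ⟨h.1, h.2⟩

lemma rr_pos_of_not_radial (hp : ¬(p 0 ≤ a ∧ p 1 = b)) : 0 < rr a b p := by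
  rw [rr_eq_norm]
  exact norm_pos_iff.2 (Complex.slitPlane_ne_zero (mem_slitPlane_of_not_radial hp))

lemma hasStrictFDerivAt_rr (hp : rr a b p ≠ 0) :
    HasStrictFDerivAt (rr a b) (EuclideanSpace.proj 0 ∘L toEuclideanCLM (𝕜 := ℝ) (Jh a b p)) p := by
  have h0 := (EuclideanSpace.proj 0 : V2 →L[ℝ] ℝ).hasStrictFDerivAt (x := p) |>.sub_const a
  have h1 := (EuclideanSpace.proj 1 : V2 →L[ℝ] ℝ).hasStrictFDerivAt (x := p) |>.sub_const b
  have hs : (p 0 - a) ^ 2 + (p 1 - b) ^ 2 ≠ 0 := by rwa [← rr_sq, pow_ne_zero_iff two_ne_zero]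
  refine (((h0.pow 2).add (h1.pow 2)).sqrt hs).congr_fderiv ?_
  ext w
  simp [Jh, mulVec, dotProduct, Fin.sum_univ_two]
  rw [show √((p 0 - a) ^ 2 + (p 1 - b) ^ 2) = rr a b p from rfl]
  field_simp

lemma hasStrictFDerivAt_theta (hp : ¬(p 0 ≤ a ∧ p 1 = b)) :
    HasStrictFDerivAt (theta a b)
      (EuclideanSpace.proj 1 ∘L toEuclideanCLM (𝕜 := ℝ) (Jh a b p)) p := by
  have hL : HasStrictFDerivAt (fun q : V2 => (⟨q 0 - a, q 1 - b⟩ : ℂ))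
      (Complex.orthonormalBasisOneI.repr.symm.toContinuousLinearEquiv : V2 →L[ℝ] ℂ) p := by
    refine ((Complex.orthonormalBasisOneI.repr.symm.toContinuousLinearEquiv.hasStrictFDerivAt
      (x := p)).sub_const (⟨a, b⟩ : ℂ)).congr_of_eventuallyEq (Eventually.of_forall fun q => ?_)
    apply Complex.ext <;> simp
  have hlog := (Complex.hasStrictFDerivAt_log_real (mem_slitPlane_of_not_radial hp)).comp p hL
  have htheta : theta a b = fun q : V2 => Complex.imCLM (Complex.log ⟨q 0 - a, q 1 - b⟩) := by
    funext q
    simp [theta, Complex.log_im]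
  rw [htheta]
  refine (Complex.imCLM.hasStrictFDerivAt.comp p hlog).congr_fderiv ?_
  ext w
  simp [Jh, mulVec, dotProduct, Fin.sum_univ_two]
  rw [rr_sq]
  ring

lemma hasStrictFDerivAt_hMeas (hp : ¬(p 0 ≤ a ∧ p 1 = b)) :
    HasStrictFDerivAt (hMeas a b) (toEuclideanCLM (𝕜 := ℝ) (Jh a b p)) p := by
  rw [hasStrictFDerivAt_euclidean]
  intro i
  fin_cases i
  · exact hasStrictFDerivAt_rr (rr_pos_of_not_radial hp).ne'
  · exact hasStrictFDerivAt_theta hp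

lemma det_Jh_sub_Jh (hr : 0 < rr a b p) (hR : 0 < rr a b q) :
    (Jh a b p - Jh a b q).det = (rr a b p + rr a b q) *
      (rr a b p * rr a b q - ((p 0 - a) * (q 0 - a) + (p 1 - b) * (q 1 - b))) /
        (rr a b p * rr a b q) ^ 2 := by
  have hr2 := rr_sq a b p
  have hR2 := rr_sq a b q
  rw [det_fin_two]
  simp only [Jh, Matrix.sub_apply, of_apply, cons_val', cons_val_zero, cons_val_one, empty_val',
    cons_val_fin_one]
  generalize rr a b p = r at *
  generalize rr a b q = R at *
  field_simp
  linear_combination (-R ^ 3) * hr2 - r ^ 3 * hR2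

lemma det_Jh_sub_Jh_pos (hpq : (p 0 - a) * (q 1 - b) - (p 1 - b) * (q 0 - a) ≠ 0) :
    0 < (Jh a b p - Jh a b q).det := by
  set dot := (p 0 - a) * (q 0 - a) + (p 1 - b) * (q 1 - b)
  set cross := (p 0 - a) * (q 1 - b) - (p 1 - b) * (q 0 - a)
  have lagrange : dot ^ 2 + cross ^ 2 = (rr a b p * rr a b q) ^ 2 := by
    rw [mul_pow, rr_sq, rr_sq]
    ring
  have hcross := sq_pos_of_ne_zero hpq
  have hrR : 0 < rr a b p * rr a b q := by
    have : 0 ≤ rr a b p * rr a b q := by unfold rr; positivity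
    nlinarith
  have hdot : dot < rr a b p * rr a b q := by nlinarith
  have hr := pos_of_mul_pos_left hrR (Real.sqrt_nonneg _)
  have hR := pos_of_mul_pos_right hrR (Real.sqrt_nonneg _)
  rw [det_Jh_sub_Jh hr hR]
  exact div_pos (mul_pos (add_pos hr hR) (sub_pos.2 hdot)) (by positivity)

end RangeBearing

lemma hasStrictFDerivAt_gRem {a b : ℝ} {x u : V2} {E : Matrix (Fin 2) (Fin 2) ℝ}
    (hu : ¬((x + mv E u) 0 ≤ a ∧ (x + mv E u) 1 = b)) :
    HasStrictFDerivAt (gRem a b x E)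
      (toEuclideanCLM (𝕜 := ℝ) ((Jh a b (x + mv E u) - Jh a b x) * E)) u := by
  have hshift : HasStrictFDerivAt (fun v => x + mv E v) (toEuclideanCLM (𝕜 := ℝ) E) u :=
    (toEuclideanCLM (𝕜 := ℝ) E).hasStrictFDerivAt.const_add x
  have := (((hasStrictFDerivAt_hMeas hu).comp u hshift).sub_const (hMeas a b x)).sub
    (toEuclideanCLM (𝕜 := ℝ) (Jh a b x) ∘L toEuclideanCLM (𝕜 := ℝ) E).hasStrictFDerivAt
  refine HasStrictFDerivAt.congr_fderiv (f := gRem a b x E) this ?_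
  rw [map_mul, map_sub, sub_mul]
  rfl

/-- **Frontier localization.** Under the avoidance hypothesis, the frontier of the
remainder set is contained in the image of `{‖u‖ = 1} ∪ {‖u‖ ≤ 1, c·u₁ + d·u₂ = 0}`. -/
theorem frontier_remainder_subset
    (a b : ℝ) (x : EuclideanSpace ℝ (Fin 2)) (E : Matrix (Fin 2) (Fin 2) ℝ)
    (hE : 0 < E.det)
    (havoid : ∀ u : EuclideanSpace ℝ (Fin 2), ‖u‖ ≤ 1 →
      ¬((x + mv E u) 0 ≤ a ∧ (x + mv E u) 1 = b))
    (c d : ℝ)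
    (hc : c = E 0 0 * (x 1 - b) - E 1 0 * (x 0 - a))
    (hd : d = E 0 1 * (x 1 - b) - E 1 1 * (x 0 - a)) :
    frontier {y : EuclideanSpace ℝ (Fin 2) |
        ∃ u : EuclideanSpace ℝ (Fin 2), ‖u‖ ≤ 1 ∧ gRem a b x E u = y} ⊆
      {y : EuclideanSpace ℝ (Fin 2) | ∃ u : EuclideanSpace ℝ (Fin 2),
        (‖u‖ = 1 ∨ (‖u‖ ≤ 1 ∧ c * u 0 + d * u 1 = 0)) ∧ gRem a b x E u = y} := by
  have hcross : ∀ u : V2,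
      ((x + mv E u) 0 - a) * (x 1 - b) - ((x + mv E u) 1 - b) * (x 0 - a) = c * u 0 + d * u 1 := by
    intro u
    simp [hc, hd, mv]
    ring
  have hS : {y | ∃ u : V2, ‖u‖ ≤ 1 ∧ gRem a b x E u = y} = gRem a b x E '' closedBall 0 1 := by
    ext
    simp
  have hg (u : V2) (hu : u ∈ closedBall 0 1) :=
    hasStrictFDerivAt_gRem (havoid u (mem_closedBall_zero_iff.1 hu))
  have hfrontier := (isCompact_closedBall (0 : V2) 1).frontier_image_subset (𝕜 := ℝ)
    (Z := {u | c * u 0 + d * u 1 = 0}) (fun u hu => (hg u hu).continuousAt.continuousWithinAt)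
    fun u hu hZ => ⟨_, hg u (interior_subset hu), range_toEuclideanCLM_eq_top <| by
      rw [det_mul]
      exact mul_ne_zero (det_Jh_sub_Jh_pos (by rwa [hcross])).ne' hE.ne'⟩
  rintro y hy
  obtain ⟨u, ⟨hu, hbd⟩, rfl⟩ := hfrontier (hS ▸ hy)
  rw [interior_closedBall _ one_ne_zero, mem_ball_zero_iff, not_lt] at hbd
  rw [mem_closedBall_zero_iff] at hu
  exact ⟨u, hbd.imp (le_antisymm hu) (⟨hu, ·⟩), rfl⟩
end
end
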